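/- Let n ≥ 1, let ψ ∈ ℂ^(2^n) be a unit vector, and let 0 ≤ ε < 1/(1 + 2^(2n−1)). Then for every 2^n × 2^n unitary matrix U, the matrix U (ε ψψ* + (1−ε) 2^{−n} I) U* is a separable n-qubit density matrix. That is, a quantum computation that starts in a pseudo-pure state whose purity parameter satisfies this bound never produces entanglement under unitary evolution. -/

import Mathlib

open Matrix
open scoped ComplexOrder

/-- A density matrix: positive semidefinite with trace 1. -/
def IsDensityMatrix {m : Type} [Fintype m] [DecidableEq m] (ρ : Matrix m m ℂ) : Prop :=
  ρ.PosSemidef ∧ ρ.trace = 1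

/-- An `n`-qubit product state: a tensor (Kronecker) product `ρ₁ ⊗ ⋯ ⊗ ρₙ` of
single-qubit density matrices, expressed entrywise on the index type `Fin n → Fin 2`. -/
def IsProductState (n : ℕ) (ρ : Matrix (Fin n → Fin 2) (Fin n → Fin 2) ℂ) : Prop :=
  ∃ σ : Fin n → Matrix (Fin 2) (Fin 2) ℂ,
    (∀ i, IsDensityMatrix (σ i)) ∧ ∀ x y, ρ x y = ∏ i, σ i (x i) (y i)

/-- An `n`-qubit state is separable if it is a finite convex combination of product states. -/
def IsSeparableState (n : ℕ) (ρ : Matrix (Fin n → Fin 2) (Fin n → Fin 2) ℂ) : Prop :=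
  ∃ (k : ℕ) (p : Fin k → ℝ) (σ : Fin k → Matrix (Fin n → Fin 2) (Fin n → Fin 2) ℂ),
    (∀ j, 0 ≤ p j) ∧ (∑ j, p j = 1) ∧ (∀ j, IsProductState n (σ j)) ∧
      ρ = ∑ j, (p j : ℂ) • σ j

/-!
Write `2ⁿ ρ = ∑_α r_α P_α` in the basis of Pauli strings `P_α = σ_{α₁} ⊗ ⋯ ⊗ σ_{αₙ}`, with real
coefficients `r_α = tr (ρ P_α)` and `r_0 = tr ρ = 1`. Each `P_α` is a signed sum `∑_s ± Π_{α,s}` of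
product projectors onto tensor products of single-qubit eigenvectors, so `r_α P_α + |r_α| I` is a
nonnegative combination of product states; hence `ρ` is separable as soon as
`∑_{α ≠ 0} |r_α| ≤ 1`. Conjugating by `U` turns the pseudo-pure state into the one with pure part
`Uψ`, whose nonidentity coefficients are `ε` times those of a pure state. For a pure state
`∑_α r_α² = 2ⁿ tr ρ² = 2ⁿ`, so Cauchy–Schwarz over the `4ⁿ - 1` strings `α ≠ 0` gives
`∑_{α ≠ 0} |r_α| ≤ √((4ⁿ - 1)(2ⁿ - 1)) ≤ 2^{2n-1}`, and `ε 2^{2n-1} ≤ 1`.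
-/

namespace Matrix

variable {ι d R : Type*} [Fintype ι] [CommSemiring R]

def piKron (A : ι → Matrix d d R) : Matrix (ι → d) (ι → d) R :=
  of fun x y => ∏ i, A i (x i) (y i)

@[simp]
theorem piKron_apply (A : ι → Matrix d d R) (x y : ι → d) :
    piKron A x y = ∏ i, A i (x i) (y i) := rfl

theorem piKron_one [DecidableEq ι] [DecidableEq d] :
    piKron (fun _ : ι => (1 : Matrix d d R)) = 1 := by
  ext x y
  simp only [piKron_apply, one_apply, Finset.prod_ite_zero, Finset.prod_const_one, funext_iff,
    Finset.mem_univ, true_implies]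

theorem sum_piKron [DecidableEq ι] {κ : Type*} [Fintype κ] (A : ι → κ → Matrix d d R) :
    ∑ s : ι → κ, piKron (fun i => A i (s i)) = piKron fun i => ∑ t, A i t := by
  ext x y
  simp only [sum_apply, piKron_apply, Fintype.prod_sum]

theorem prod_smul_piKron (c : ι → R) (A : ι → Matrix d d R) :
    (∏ i, c i) • piKron A = piKron fun i => c i • A i := by
  ext x y
  simp only [smul_apply, piKron_apply, smul_eq_mul, Finset.prod_mul_distrib]

theorem trace_piKron [DecidableEq ι] [Fintype d] (A : ι → Matrix d d R) :
    (piKron A).trace = ∏ i, (A i).trace := by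
  simp only [trace, diag_apply, piKron_apply, Fintype.prod_sum]

theorem conjTranspose_piKron [StarRing R] (A : ι → Matrix d d R) :
    (piKron A)ᴴ = piKron fun i => (A i)ᴴ := by
  ext x y
  simp

section

variable {m : Type*} [Fintype m]

theorem star_dotProduct_self_eq_sum_norm_sq (v : m → ℂ) :
    star v ⬝ᵥ v = ((∑ x, ‖v x‖ ^ 2 : ℝ) : ℂ) := by
  simp [dotProduct, Complex.conj_mul']

theorem star_mulVec_dotProduct_mulVec [DecidableEq m] {U : Matrix m m ℂ}
    (hU : Uᴴ * U = 1) (v : m → ℂ) : star (U *ᵥ v) ⬝ᵥ (U *ᵥ v) = star v ⬝ᵥ v := by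
  rw [star_mulVec, dotProduct_mulVec, vecMul_vecMul, hU, vecMul_one]

theorem mul_vecMulVec_mul_conjTranspose (U : Matrix m m ℂ)
    (v : m → ℂ) : U * vecMulVec v (star v) * Uᴴ = vecMulVec (U *ᵥ v) (star (U *ᵥ v)) := by
  rw [mul_vecMulVec, vecMulVec_mul, star_mulVec]

theorem vecMulVec_star_mul_self {v : m → ℂ}
    (hv : star v ⬝ᵥ v = 1) :
    vecMulVec v (star v) * vecMulVec v (star v) = vecMulVec v (star v) := by
  rw [vecMulVec_mul_vecMulVec, hv, one_smul]

end

end Matrix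

theorem IsProductState.trace_eq_one {n : ℕ} {ρ : Matrix (Fin n → Fin 2) (Fin n → Fin 2) ℂ}
    (hρ : IsProductState n ρ) : ρ.trace = 1 := by
  obtain ⟨σ, hσ, hρσ⟩ := hρ
  rw [show ρ = piKron σ from ext hρσ, trace_piKron]
  exact Finset.prod_eq_one fun i _ => (hσ i).2

theorem isSeparableState_of_eq_sum {n : ℕ} {ρ : Matrix (Fin n → Fin 2) (Fin n → Fin 2) ℂ}
    {κ : Type*} [Fintype κ] (w : κ → ℝ) (σ : κ → Matrix (Fin n → Fin 2) (Fin n → Fin 2) ℂ)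
    (hw : ∀ j, 0 ≤ w j) (hσ : ∀ j, IsProductState n (σ j)) (hρ : ρ = ∑ j, (w j : ℂ) • σ j)
    (htr : ρ.trace = 1) : IsSeparableState n ρ := by
  have hw1 : ∑ j, w j = 1 := by
    rw [hρ, trace_sum] at htr
    simp only [trace_smul, (hσ _).trace_eq_one, smul_eq_mul, mul_one] at htr
    exact_mod_cast htr
  let e := Fintype.equivFin κ
  refine ⟨Fintype.card κ, w ∘ e.symm, σ ∘ e.symm, fun j => hw _, ?_, fun j => hσ _, ?_⟩
  · rwa [← e.symm.sum_comp w] at hw1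
  · rw [hρ, ← e.symm.sum_comp]
    rfl

theorem four_pow_sub_one_mul_two_pow_sub_one_le (n : ℕ) :
    ((4 : ℝ) ^ n - 1) * (2 ^ n - 1) ≤ (2 ^ (2 * n - 1)) ^ 2 := by
  rcases n with _ | m
  · norm_num
  · obtain ⟨x, hx⟩ : ∃ x : ℝ, x = 2 ^ m := ⟨_, rfl⟩
    have hx1 : 1 ≤ x := hx ▸ one_le_pow₀ one_le_two
    have h4 : (4 : ℝ) ^ (m + 1) = 4 * x ^ 2 := by
      rw [hx, pow_succ', ← pow_mul, mul_comm m 2, pow_mul]; norm_num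
    have h2 : (2 : ℝ) ^ (m + 1) = 2 * x := by rw [hx]; ring
    have h2' : (2 : ℝ) ^ (2 * (m + 1) - 1) = 2 * x ^ 2 := by
      rw [show 2 * (m + 1) - 1 = 2 * m + 1 by omega, hx]; ring
    rw [h4, h2, h2']
    nlinarith [sq_nonneg (x - 1)]

noncomputable section

namespace Qubit

open Complex Finset

variable {n : ℕ}

def pauli : Fin 4 → Matrix (Fin 2) (Fin 2) ℂ :=
  ![1, !![0, 1; 1, 0], !![0, -I; I, 0], !![1, 0; 0, -1]]

def invSqrtTwo : ℂ := ((√2)⁻¹ : ℝ)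

theorem invSqrtTwo_sq : invSqrtTwo ^ 2 = 2⁻¹ := by
  rw [invSqrtTwo, ← ofReal_pow, inv_pow, Real.sq_sqrt zero_le_two]; norm_num

theorem conj_invSqrtTwo : starRingEnd ℂ invSqrtTwo = invSqrtTwo := conj_ofReal _

-- `pauliEigvec j s` is a unit eigenvector of `pauli j` for the eigenvalue `pauliSign j s`.
def pauliEigvec : Fin 4 → Fin 2 → Fin 2 → ℂ :=
  ![![![1, 0], ![0, 1]],
    ![![invSqrtTwo, invSqrtTwo], ![invSqrtTwo, -invSqrtTwo]],
    ![![invSqrtTwo, invSqrtTwo * I], ![invSqrtTwo, -(invSqrtTwo * I)]],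
    ![![1, 0], ![0, 1]]]

def pauliProj (j : Fin 4) (s : Fin 2) : Matrix (Fin 2) (Fin 2) ℂ :=
  vecMulVec (pauliEigvec j s) (star (pauliEigvec j s))

def pauliSign (j : Fin 4) (s : Fin 2) : ℝ := if j = 0 ∨ s = 0 then 1 else -1

theorem abs_pauliSign (j : Fin 4) (s : Fin 2) : |pauliSign j s| = 1 := by
  unfold pauliSign; split_ifs <;> norm_num

theorem isDensityMatrix_pauliProj (j : Fin 4) (s : Fin 2) : IsDensityMatrix (pauliProj j s) := by
  refine ⟨posSemidef_vecMulVec_self_star _, ?_⟩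
  simp only [pauliProj, trace_vecMulVec, dotProduct, Fin.sum_univ_two, Pi.star_apply]
  fin_cases j <;> fin_cases s <;>
    simp [pauliEigvec, conj_invSqrtTwo] <;> ring_nf <;> simp [invSqrtTwo_sq] <;> norm_num

theorem sum_pauliProj (j : Fin 4) : ∑ s, pauliProj j s = 1 := by
  ext a b
  simp only [Matrix.sum_apply, pauliProj, vecMulVec_apply, Fin.sum_univ_two, Pi.star_apply]
  fin_cases j <;> fin_cases a <;> fin_cases b <;>
    simp [pauliEigvec, conj_invSqrtTwo] <;> ring_nf <;> simp [invSqrtTwo_sq]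

theorem sum_pauliSign_smul_pauliProj (j : Fin 4) :
    ∑ s, (pauliSign j s : ℂ) • pauliProj j s = pauli j := by
  ext a b
  simp only [Matrix.sum_apply, Matrix.smul_apply, pauliProj, vecMulVec_apply, Fin.sum_univ_two,
    Pi.star_apply]
  fin_cases j <;> fin_cases a <;> fin_cases b <;>
    simp [pauliSign, pauliEigvec, pauli, conj_invSqrtTwo] <;> ring_nf <;>
    simp [invSqrtTwo_sq] <;> ring

theorem trace_pauli {j : Fin 4} (hj : j ≠ 0) : (pauli j).trace = 0 := by
  fin_cases j <;> simp_all [pauli, trace]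

theorem isHermitian_pauli (j : Fin 4) : (pauli j).IsHermitian := by
  ext a b
  fin_cases j <;> fin_cases a <;> fin_cases b <;> simp [pauli]

theorem sum_pauli_apply_mul_pauli_apply (a b c d : Fin 2) :
    ∑ j, pauli j a b * pauli j c d = if a = d ∧ b = c then 2 else 0 := by
  fin_cases a <;> fin_cases b <;> fin_cases c <;> fin_cases d <;>
    simp [pauli, Fin.sum_univ_four] <;> norm_num

def pauliString (α : Fin n → Fin 4) : Matrix (Fin n → Fin 2) (Fin n → Fin 2) ℂ :=
  piKron fun i => pauli (α i)

def pauliStringProj (α : Fin n → Fin 4) (s : Fin n → Fin 2) :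
    Matrix (Fin n → Fin 2) (Fin n → Fin 2) ℂ :=
  piKron fun i => pauliProj (α i) (s i)

def pauliStringSign (α : Fin n → Fin 4) (s : Fin n → Fin 2) : ℝ := ∏ i, pauliSign (α i) (s i)

theorem pauliString_zero : pauliString (0 : Fin n → Fin 4) = 1 := piKron_one

theorem trace_pauliString {α : Fin n → Fin 4} (hα : α ≠ 0) : (pauliString α).trace = 0 := by
  obtain ⟨i, hi⟩ := Function.ne_iff.mp hα
  rw [pauliString, trace_piKron]
  exact prod_eq_zero (mem_univ i) (trace_pauli hi)

theorem isHermitian_pauliString (α : Fin n → Fin 4) : (pauliString α).IsHermitian := by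
  rw [IsHermitian, pauliString, conjTranspose_piKron]
  simp only [(isHermitian_pauli _).eq]

theorem sum_pauliString_apply_mul_pauliString_apply (x y u v : Fin n → Fin 2) :
    ∑ α, pauliString α x y * pauliString α u v = if x = v ∧ y = u then 2 ^ n else 0 := by
  simp only [pauliString, piKron_apply, ← prod_mul_distrib]
  rw [← Fintype.prod_sum (fun i j => pauli j (x i) (y i) * pauli j (u i) (v i))]
  simp only [sum_pauli_apply_mul_pauli_apply, prod_ite_zero, prod_const,
    card_univ, Fintype.card_fin, funext_iff, forall_and, mem_univ, true_implies]

theorem isProductState_pauliStringProj (α : Fin n → Fin 4) (s : Fin n → Fin 2) :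
    IsProductState n (pauliStringProj α s) :=
  ⟨fun i => pauliProj (α i) (s i), fun _ => isDensityMatrix_pauliProj _ _, fun _ _ => rfl⟩

theorem sum_pauliStringProj (α : Fin n → Fin 4) : ∑ s, pauliStringProj α s = 1 := by
  simp only [pauliStringProj, sum_piKron, sum_pauliProj, piKron_one]

theorem sum_pauliStringSign_smul_pauliStringProj (α : Fin n → Fin 4) :
    ∑ s, (pauliStringSign α s : ℂ) • pauliStringProj α s = pauliString α := by
  simp only [pauliStringSign, pauliStringProj, Complex.ofReal_prod, prod_smul_piKron]
  rw [sum_piKron fun i t => (pauliSign (α i) t : ℂ) • pauliProj (α i) t]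
  simp only [sum_pauliSign_smul_pauliProj, pauliString]

theorem abs_pauliStringSign (α : Fin n → Fin 4) (s : Fin n → Fin 2) :
    |pauliStringSign α s| = 1 := by
  simp only [pauliStringSign, abs_prod, abs_pauliSign, prod_const_one]

theorem pauliStringSign_zero (s : Fin n → Fin 2) : pauliStringSign 0 s = 1 := by
  simp [pauliStringSign, pauliSign]

def pauliCoeff (ρ : Matrix (Fin n → Fin 2) (Fin n → Fin 2) ℂ) (α : Fin n → Fin 4) : ℝ :=
  (ρ * pauliString α).trace.re

theorem ofReal_pauliCoeff {ρ : Matrix (Fin n → Fin 2) (Fin n → Fin 2) ℂ} (hρ : ρ.IsHermitian)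
    (α : Fin n → Fin 4) : (pauliCoeff ρ α : ℂ) = (ρ * pauliString α).trace := by
  refine Complex.conj_eq_iff_re.mp ?_
  rw [← Complex.star_def, ← trace_conjTranspose, conjTranspose_mul, hρ.eq,
    (isHermitian_pauliString α).eq, trace_mul_comm]

theorem pauliCoeff_zero (ρ : Matrix (Fin n → Fin 2) (Fin n → Fin 2) ℂ) :
    pauliCoeff ρ 0 = ρ.trace.re := by
  rw [pauliCoeff, pauliString_zero, Matrix.mul_one]

theorem sum_trace_mul_pauliString_smul (ρ : Matrix (Fin n → Fin 2) (Fin n → Fin 2) ℂ) :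
    ∑ α, (ρ * pauliString α).trace • pauliString α = (2 ^ n : ℂ) • ρ := by
  ext u v
  simp only [Matrix.sum_apply, Matrix.smul_apply, smul_eq_mul, trace, diag_apply, mul_apply,
    sum_mul, mul_assoc]
  rw [sum_comm]
  simp only [sum_comm (γ := Fin n → Fin 4), ← mul_sum,
    sum_pauliString_apply_mul_pauliString_apply]
  simp [ite_and, mul_comm]

theorem sum_pauliCoeff_smul {ρ : Matrix (Fin n → Fin 2) (Fin n → Fin 2) ℂ} (hρ : ρ.IsHermitian) :
    ∑ α, (pauliCoeff ρ α : ℂ) • pauliString α = (2 ^ n : ℂ) • ρ := by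
  simp only [ofReal_pauliCoeff hρ, sum_trace_mul_pauliString_smul]

theorem sum_pauliCoeff_sq {ρ : Matrix (Fin n → Fin 2) (Fin n → Fin 2) ℂ} (hρ : ρ.IsHermitian) :
    ∑ α, (pauliCoeff ρ α : ℂ) ^ 2 = 2 ^ n * (ρ * ρ).trace := calc
  ∑ α, (pauliCoeff ρ α : ℂ) ^ 2 = ∑ α, (pauliCoeff ρ α : ℂ) * (ρ * pauliString α).trace := by
    simp only [sq, ofReal_pauliCoeff hρ]
  _ = (ρ * ∑ α, (pauliCoeff ρ α : ℂ) • pauliString α).trace := by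
    simp only [Matrix.mul_sum, trace_sum, mul_smul_comm, trace_smul, smul_eq_mul]
  _ = 2 ^ n * (ρ * ρ).trace := by
    rw [sum_pauliCoeff_smul hρ, mul_smul_comm, trace_smul, smul_eq_mul]

theorem pauliCoeff_smul_add_smul_one (ρ : Matrix (Fin n → Fin 2) (Fin n → Fin 2) ℂ) (a b : ℝ)
    {α : Fin n → Fin 4} (hα : α ≠ 0) :
    pauliCoeff ((a : ℂ) • ρ + (b : ℂ) • 1) α = a * pauliCoeff ρ α := by
  simp only [pauliCoeff, Matrix.add_mul, smul_mul, Matrix.one_mul, trace_add, trace_smul,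
    trace_pauliString hα, smul_eq_mul, mul_zero, add_zero, Complex.re_ofReal_mul]

theorem sum_smul_pauliStringProj (c d : (Fin n → Fin 4) → ℝ) :
    ∑ p : (Fin n → Fin 4) × (Fin n → Fin 2),
        ((c p.1 * pauliStringSign p.1 p.2 + d p.1 : ℝ) : ℂ) • pauliStringProj p.1 p.2 =
      ∑ α, (c α : ℂ) • pauliString α + ((∑ α, d α : ℝ) : ℂ) • 1 := by
  simp only [Fintype.sum_prod_type, Complex.ofReal_add, Complex.ofReal_mul, add_smul,
    sum_add_distrib, mul_smul, ← smul_sum, sum_pauliStringSign_smul_pauliStringProj,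
    sum_pauliStringProj, Complex.ofReal_sum, sum_smul]

theorem isSeparableState_of_sum_abs_pauliCoeff_le_one
    {ρ : Matrix (Fin n → Fin 2) (Fin n → Fin 2) ℂ} (hρ : ρ.IsHermitian) (htr : ρ.trace = 1)
    (hl1 : ∑ α ∈ univ.erase 0, |pauliCoeff ρ α| ≤ 1) : IsSeparableState n ρ := by
  set r := pauliCoeff ρ
  set T := ∑ α ∈ univ.erase 0, |r α|
  -- `t` moves the weight `T` off the identity string, so that each `r α • P_α + |r α| • 1`
  -- becomes a nonnegative combination of the projectors `pauliStringProj α s`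
  let t : (Fin n → Fin 4) → ℝ := fun α => if α = 0 then -T else |r α|
  have hr0 : r 0 = 1 := by simp [r, pauliCoeff_zero, htr]
  have ht : ∑ α, t α = 0 := by
    rw [← add_sum_erase _ _ (mem_univ 0)]
    simp only [t, if_pos rfl]
    rw [sum_congr rfl fun α hα => if_neg (ne_of_mem_erase hα)]
    ring
  refine isSeparableState_of_eq_sum (κ := (Fin n → Fin 4) × (Fin n → Fin 2))
    (fun p => (2 ^ n)⁻¹ * (r p.1 * pauliStringSign p.1 p.2 + t p.1))
    (fun p => pauliStringProj p.1 p.2) (fun p => ?_) (fun p => isProductState_pauliStringProj _ _)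
    ?_ htr
  · rcases eq_or_ne p.1 0 with h | h
    · simp only [t, h, if_pos rfl, hr0, pauliStringSign_zero]
      exact mul_nonneg (by positivity) (by linarith)
    · have hsign := neg_abs_le (r p.1 * pauliStringSign p.1 p.2)
      rw [abs_mul, abs_pauliStringSign, mul_one] at hsign
      simp only [t, if_neg h]
      exact mul_nonneg (by positivity) (by linarith)
  · have hsum := sum_smul_pauliStringProj r t
    rw [ht, sum_pauliCoeff_smul hρ, Complex.ofReal_zero, zero_smul, add_zero] at hsum
    simp only [Complex.ofReal_mul, mul_smul, ← smul_sum, hsum]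
    rw [smul_smul]
    simp

theorem sum_abs_pauliCoeff_le_of_pure {φ : (Fin n → Fin 2) → ℂ} (hφ : star φ ⬝ᵥ φ = 1) :
    ∑ α ∈ univ.erase 0, |pauliCoeff (vecMulVec φ (star φ)) α| ≤ 2 ^ (2 * n - 1) := by
  set ρ := vecMulVec φ (star φ)
  have hρ : ρ.IsHermitian := (posSemidef_vecMulVec_self_star φ).isHermitian
  have htr : ρ.trace = 1 := by rw [trace_vecMulVec, dotProduct_comm, hφ]
  have hsq : ∑ α, pauliCoeff ρ α ^ 2 = 2 ^ n := by
    have := sum_pauliCoeff_sq hρ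
    rw [vecMulVec_star_mul_self hφ, htr, mul_one] at this
    exact_mod_cast this
  have hsq' : ∑ α ∈ univ.erase 0, |pauliCoeff ρ α| ^ 2 = 2 ^ n - 1 := by
    simp only [sq_abs]
    rw [sum_erase_eq_sub (mem_univ _), hsq, pauliCoeff_zero, htr, Complex.one_re, one_pow]
  have hcard : ((univ.erase (0 : Fin n → Fin 4)).card : ℝ) = 4 ^ n - 1 := by
    rw [card_erase_of_mem (mem_univ _), card_univ, Fintype.card_fun, Fintype.card_fin,
      Fintype.card_fin, Nat.cast_pred (by positivity)]
    norm_num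
  have hcs := sq_sum_le_card_mul_sum_sq (s := univ.erase 0) (f := fun α => |pauliCoeff ρ α|)
  rw [hcard, hsq'] at hcs
  exact (pow_le_pow_iff_left₀ (sum_nonneg fun _ _ => abs_nonneg _) (by positivity)
    two_ne_zero).mp (hcs.trans (four_pow_sub_one_mul_two_pow_sub_one_le n))

def pseudoPure (ψ : (Fin n → Fin 2) → ℂ) (ε : ℝ) : Matrix (Fin n → Fin 2) (Fin n → Fin 2) ℂ :=
  (ε : ℂ) • vecMulVec ψ (star ψ) + (((1 - ε) / 2 ^ n : ℝ) : ℂ) • 1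

theorem conj_pseudoPure {U : Matrix (Fin n → Fin 2) (Fin n → Fin 2) ℂ} (hU : U * Uᴴ = 1)
    (ψ : (Fin n → Fin 2) → ℂ) (ε : ℝ) : U * pseudoPure ψ ε * Uᴴ = pseudoPure (U *ᵥ ψ) ε := by
  simp only [pseudoPure, Matrix.mul_add, Matrix.add_mul, Matrix.mul_smul, Matrix.smul_mul,
    mul_vecMulVec_mul_conjTranspose, Matrix.mul_one, hU]

theorem isDensityMatrix_pseudoPure {ψ : (Fin n → Fin 2) → ℂ} (hψ : star ψ ⬝ᵥ ψ = 1) {ε : ℝ}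
    (hε0 : 0 ≤ ε) (hε1 : ε ≤ 1) : IsDensityMatrix (pseudoPure ψ ε) := by
  refine ⟨.add (.smul (posSemidef_vecMulVec_self_star ψ) ?_) (.smul .one ?_), ?_⟩
  · exact_mod_cast hε0
  · have : 0 ≤ (1 - ε) / 2 ^ n := div_nonneg (by linarith) (by positivity)
    exact_mod_cast this
  · rw [pseudoPure, trace_add, trace_smul, trace_smul, trace_vecMulVec, dotProduct_comm, hψ,
      trace_one, Fintype.card_fun, Fintype.card_fin, Fintype.card_fin]
    push_cast
    rw [smul_eq_mul, smul_eq_mul, div_mul_cancel₀ _ (by positivity)]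
    ring

theorem isSeparableState_pseudoPure {ψ : (Fin n → Fin 2) → ℂ} (hψ : star ψ ⬝ᵥ ψ = 1) {ε : ℝ}
    (hε0 : 0 ≤ ε) (hε : ε * 2 ^ (2 * n - 1) ≤ 1) : IsSeparableState n (pseudoPure ψ ε) := by
  have hε1 : ε ≤ 1 := (le_mul_of_one_le_right hε0 (one_le_pow₀ one_le_two)).trans hε
  obtain ⟨hpos, htr⟩ := isDensityMatrix_pseudoPure hψ hε0 hε1
  refine isSeparableState_of_sum_abs_pauliCoeff_le_one hpos.isHermitian htr ?_
  calc ∑ α ∈ univ.erase 0, |pauliCoeff (pseudoPure ψ ε) α|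
      = ε * ∑ α ∈ univ.erase 0, |pauliCoeff (vecMulVec ψ (star ψ)) α| := by
        rw [mul_sum]
        refine sum_congr rfl fun α hα => ?_
        rw [pseudoPure, pauliCoeff_smul_add_smul_one _ _ _ (ne_of_mem_erase hα), abs_mul,
          abs_of_nonneg hε0]
    _ ≤ ε * 2 ^ (2 * n - 1) := mul_le_mul_of_nonneg_left (sum_abs_pauliCoeff_le_of_pure hψ) hε0
    _ ≤ 1 := hε

end Qubit

end

open Qubit

theorem pps_unitary_evolution_separable (n : ℕ)
    (ψ : (Fin n → Fin 2) → ℂ) (hψ : ∑ x, ‖ψ x‖ ^ 2 = 1) (ε : ℝ) (hε0 : 0 ≤ ε)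
    (hε : ε < 1 / (1 + 2 ^ (2 * n - 1)))
    (U : Matrix (Fin n → Fin 2) (Fin n → Fin 2) ℂ) (hU : U * Uᴴ = 1) :
    IsDensityMatrix
      (U * ((ε : ℂ) • vecMulVec ψ (star ψ) + (((1 - ε) / 2 ^ n : ℝ) : ℂ) • 1) * Uᴴ) ∧
    IsSeparableState n
      (U * ((ε : ℂ) • vecMulVec ψ (star ψ) + (((1 - ε) / 2 ^ n : ℝ) : ℂ) • 1) * Uᴴ) := by
  have hφ : star (U *ᵥ ψ) ⬝ᵥ (U *ᵥ ψ) = 1 := by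
    rw [star_mulVec_dotProduct_mulVec (mul_eq_one_comm.mp hU), star_dotProduct_self_eq_sum_norm_sq,
      hψ, Complex.ofReal_one]
  have hε' : ε * 2 ^ (2 * n - 1) < 1 - ε := by
    rw [lt_div_iff₀ (by positivity)] at hε
    linarith
  have hεX : 0 ≤ ε * 2 ^ (2 * n - 1) := by positivity
  change IsDensityMatrix (U * pseudoPure ψ ε * Uᴴ) ∧ IsSeparableState n (U * pseudoPure ψ ε * Uᴴ)
  rw [conj_pseudoPure hU]
  exact ⟨isDensityMatrix_pseudoPure hφ hε0 (by linarith),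
    isSeparableState_pseudoPure hφ hε0 (by linarith)⟩
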